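/- For the SRM defined by g_α(λ) = (1+(ln α)^{-1})/(λ-(ln α)^{-1}) for α ∈ (0,α₀), α₀ < e^{-1}, with r_α(λ)=(1+λ)/(1-λ ln α), the function ρ(α) = -(ln α)^{-1} is optimal qualification: s_ρ(λ)=λ/(1+λ) ∈ (0,∞) for every λ>0, and s_ρ(λ)|r_α(λ)|/ρ(α) = λ/(λ-(ln α)^{-1}) ≥ 1/2 for all λ ≥ -(ln α)^{-1}. Moreover, for every μ>0 and λ>0, |r_α(λ)|λ^μ/α^μ → +∞ as α→0⁺, so the method has no classical qualification. -/

import Mathlib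

/-!
Write `ρ(α) = -(ln α)⁻¹`. The residual is `r_α(λ) = (1 + λ)/(1 - λ ln α) = ρ(1 + λ)/(λ + ρ)`, so
`ρ(α)/|r_α(λ)| = (λ + ρ)/(1 + λ) → λ/(1 + λ)`, while with `s(λ) = λ/(1 + λ)` the quotient
`s(λ)|r_α(λ)|/ρ(α) = λ/(λ + ρ)` tends to `1` and is at least `1/2` as soon as `λ ≥ ρ`.
Since `ρ` decays only logarithmically, `(1 - λ ln α) α^μ → 0`, so `|r_α(λ)|/α^μ → ∞` for every `μ > 0`.
-/

open Filter Topology Set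

/-- A spectral regularization method `{g_α}_{α ∈ (0,α₀)}`:
`|λ g_α(λ)| ≤ C` uniformly (H2) and `g_α(λ) → 1/λ` as `α → 0⁺` for each `λ > 0` (H3). -/
structure SRM where
  α₀ : ℝ
  hα₀ : 0 < α₀
  g : ℝ → ℝ → ℝ
  C : ℝ
  hC : 0 < C
  bound : ∀ α ∈ Ioo (0:ℝ) α₀, ∀ l : ℝ, 0 ≤ l → |l * g α l| ≤ C
  tendsto_inv : ∀ l : ℝ, 0 < l → Tendsto (fun α => g α l) (𝓝[>] 0) (𝓝 (1 / l))

namespace SRM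
/-- `r_α(λ) = 1 - λ g_α(λ)`. -/
def r (G : SRM) (α l : ℝ) : ℝ := 1 - l * G.g α l
end SRM

/-- The class `𝒪` of nondecreasing positive functions with `ρ(α) → 0` as `α → 0⁺`. -/
def memO (ρ : ℝ → ℝ) : Prop :=
  (∀ a, 0 < a → 0 < ρ a) ∧ MonotoneOn ρ (Ioi (0:ℝ)) ∧ Tendsto ρ (𝓝[>] 0) (𝓝 0)

/-- The class `𝒮` of continuous `s : [0,∞) → [0,∞)` with `s(0)=0`, `s(λ)>0` for `λ>0`. -/
def memS (s : ℝ → ℝ) : Prop :=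
  ContinuousOn s (Ici (0:ℝ)) ∧ s 0 = 0 ∧ (∀ l, 0 ≤ l → 0 ≤ s l) ∧ (∀ l, 0 < l → 0 < s l)

/-- `(s,ρ)` is a weak source-order pair: `s(λ)|r_α(λ)|/ρ(α) = O(1)` as `α → 0⁺`, each `λ>0`. -/
def weakPair (G : SRM) (s ρ : ℝ → ℝ) : Prop :=
  ∀ l, 0 < l → ∃ k : ℝ, ∀ᶠ α in 𝓝[>] (0:ℝ), s l * |G.r α l| / ρ α ≤ k

/-- `(s,ρ)` is a strong source-order pair: weak, and the `O(1)` is never `o(1)`. -/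
def strongPair (G : SRM) (s ρ : ℝ → ℝ) : Prop :=
  weakPair G s ρ ∧
    ∀ l, 0 < l → 0 < Filter.limsup (fun α => s l * |G.r α l| / ρ α) (𝓝[>] (0:ℝ))

/-- `(ρ,s)` is an order-source pair: `s(λ)|r_α(λ)|/ρ(α) ≥ γ` for all `λ ≥ h(α)`. -/
def orderSourcePair (G : SRM) (ρ s : ℝ → ℝ) : Prop :=
  ∃ γ > (0:ℝ), ∃ h : ℝ → ℝ, (∀ α ∈ Ioo (0:ℝ) G.α₀, 0 < h α) ∧
    Tendsto h (𝓝[>] 0) (𝓝 0) ∧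
    ∀ α ∈ Ioo (0:ℝ) G.α₀, ∀ l, h α ≤ l → γ ≤ s l * |G.r α l| / ρ α

/-- `ρ` is weak (generalized) qualification of `{g_α}`. -/
def weakQual (G : SRM) (ρ : ℝ → ℝ) : Prop := ∃ s, memS s ∧ weakPair G s ρ

/-- `ρ` is strong qualification of `{g_α}`. -/
def strongQual (G : SRM) (ρ : ℝ → ℝ) : Prop := ∃ s, memS s ∧ strongPair G s ρ

/-- `ρ` is optimal qualification of `{g_α}`. -/
def optQual (G : SRM) (ρ : ℝ → ℝ) : Prop :=
  ∃ s, memS s ∧ strongPair G s ρ ∧ orderSourcePair G ρ s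

/-- `s_ρ(λ) = liminf_{α→0⁺} ρ(α)/|r_α(λ)|`, valued in `[0,∞]`. -/
noncomputable def SRM.sLow (G : SRM) (ρ : ℝ → ℝ) (l : ℝ) : ENNReal :=
  Filter.liminf (fun α => ENNReal.ofReal (ρ α) / ENNReal.ofReal |G.r α l|) (𝓝[>] (0:ℝ))

open Real

namespace SRM

variable (G : SRM) {s ρ : ℝ → ℝ} {l c : ℝ}

theorem sLow_eq_of_tendsto (hr : ∀ᶠ α in 𝓝[>] 0, G.r α l ≠ 0)
    (h : Tendsto (fun α => ρ α / |G.r α l|) (𝓝[>] 0) (𝓝 c)) :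
    G.sLow ρ l = ENNReal.ofReal c := by
  refine ((ENNReal.continuous_ofReal.tendsto c).comp h).congr' ?_ |>.liminf_eq
  filter_upwards [hr] with α hα
  exact ENNReal.ofReal_div_of_pos (abs_pos.mpr hα)

theorem strongPair_of_tendsto
    (h : ∀ l, 0 < l → ∃ c > 0, Tendsto (fun α => s l * |G.r α l| / ρ α) (𝓝[>] 0) (𝓝 c)) :
    strongPair G s ρ := by
  refine ⟨fun l hl => ?_, fun l hl => ?_⟩
  · obtain ⟨c, -, hc⟩ := h l hl
    exact ⟨c + 1, (hc.eventually_lt_const (lt_add_one c)).mono fun _ => le_of_lt⟩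
  · obtain ⟨c, hc_pos, hc⟩ := h l hl
    rwa [hc.limsup_eq]

end SRM

theorem memS_div_one_add : memS fun l => l / (1 + l) := by
  refine ⟨continuousOn_id.div (by fun_prop) fun l hl => ?_, by norm_num,
    fun l hl => div_nonneg hl (by linarith), fun l hl => div_pos hl (by linarith)⟩
  exact (add_pos_of_pos_of_nonneg one_pos hl).ne'

theorem one_half_le_div_sub {l u : ℝ} (hu : u < 0) (hl : -u ≤ l) : 1 / 2 ≤ l / (l - u) := by
  rw [div_le_div_iff₀ two_pos (by linarith)]
  linarith

theorem one_sub_mul_log_pos {α l : ℝ} (hα0 : 0 < α) (hα1 : α < 1) (hl : 0 ≤ l) :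
    0 < 1 - l * log α := by
  nlinarith [log_neg hα0 hα1]

theorem neg_inv_log_pos {α : ℝ} (hα0 : 0 < α) (hα1 : α < 1) : 0 < -(log α)⁻¹ :=
  neg_pos.mpr (inv_lt_zero.mpr (log_neg hα0 hα1))

theorem tendsto_neg_inv_log_nhdsGT_zero :
    Tendsto (fun α => -(log α)⁻¹) (𝓝[>] 0) (𝓝 0) := by
  simpa using (tendsto_inv_atBot_zero.comp tendsto_log_nhdsGT_zero).neg

theorem tendsto_one_sub_mul_log_mul_rpow_nhdsGT_zero (c : ℝ) {μ : ℝ} (hμ : 0 < μ) :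
    Tendsto (fun α => (1 - c * log α) * α ^ μ) (𝓝[>] 0) (𝓝 0) := by
  have hpow : Tendsto (fun α : ℝ => α ^ μ) (𝓝[>] 0) (𝓝 0) := by
    simpa [zero_rpow hμ.ne'] using
      ((continuousAt_rpow_const 0 μ (Or.inr hμ.le)).tendsto).mono_left nhdsWithin_le_nhds
  simpa [sub_mul, mul_assoc] using
    hpow.sub ((tendsto_log_mul_rpow_nhdsGT_zero hμ).const_mul c)

namespace SRM

def HasLogResidual (G : SRM) : Prop :=
  ∀ α ∈ Ioo (0:ℝ) G.α₀, ∀ l : ℝ, 0 ≤ l → |G.r α l| = (1 + l) / (1 - l * log α)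

variable {G : SRM}

theorem hasLogResidual_of_g_eq (hα₀ : G.α₀ ≤ 1)
    (hg : ∀ α ∈ Ioo (0:ℝ) G.α₀, ∀ l : ℝ, 0 ≤ l →
      G.g α l = (1 + (log α)⁻¹) / (l - (log α)⁻¹)) :
    G.HasLogResidual := by
  intro α hα l hl
  have hlog : log α < 0 := log_neg hα.1 (hα.2.trans_le hα₀)
  have hden : 0 < 1 - l * log α := by nlinarith
  have hr : G.r α l = (1 + l) / (1 - l * log α) := by
    have : l * log α - 1 ≠ 0 := by linarith
    rw [r, hg α hα l hl]
    field_simp [hlog.ne, hden.ne']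
    ring
  rw [hr, abs_of_pos (div_pos (by linarith) hden)]

theorem HasLogResidual.source_ratio_eq (hα₀ : G.α₀ ≤ 1) (hr : G.HasLogResidual) {α l : ℝ}
    (hα : α ∈ Ioo 0 G.α₀) (hl : 0 ≤ l) :
    l / (1 + l) * |G.r α l| / -(log α)⁻¹ = l / (l - (log α)⁻¹) := by
  have hlog := log_neg hα.1 (hα.2.trans_le hα₀)
  have hden := one_sub_mul_log_pos hα.1 (hα.2.trans_le hα₀) hl
  have : l * log α - 1 ≠ 0 := by linarith
  rw [hr α hα l hl]
  field_simp [hlog.ne, hden.ne', (by linarith : 1 + l ≠ 0)]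
  ring

theorem HasLogResidual.sLow_eq (hα₀ : G.α₀ ≤ 1) (hr : G.HasLogResidual) {l : ℝ} (hl : 0 < l) :
    G.sLow (fun a => -(log a)⁻¹) l = ENNReal.ofReal (l / (1 + l)) := by
  have hlim : Tendsto (fun α => (l - (log α)⁻¹) / (1 + l)) (𝓝[>] 0) (𝓝 (l / (1 + l))) := by
    simpa [← sub_eq_add_neg] using (tendsto_neg_inv_log_nhdsGT_zero.const_add l).div_const (1 + l)
  refine G.sLow_eq_of_tendsto ?_ (hlim.congr' ?_) <;>
    filter_upwards [Ioo_mem_nhdsGT G.hα₀] with α hα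
  · rw [← abs_pos, hr α hα l hl.le]
    exact div_pos (by linarith) (one_sub_mul_log_pos hα.1 (hα.2.trans_le hα₀) hl.le)
  · have hlog := log_neg hα.1 (hα.2.trans_le hα₀)
    have hden := one_sub_mul_log_pos hα.1 (hα.2.trans_le hα₀) hl.le
    rw [hr α hα l hl.le]
    field_simp [hlog.ne, hden.ne']
    ring

theorem HasLogResidual.optQual (hα₀ : G.α₀ ≤ 1) (hr : G.HasLogResidual) :
    optQual G fun a => -(log a)⁻¹ := by
  refine ⟨fun l => l / (1 + l), memS_div_one_add,
    G.strongPair_of_tendsto fun l hl => ⟨1, one_pos, ?_⟩, 1 / 2, one_half_pos,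
    fun α => -(log α)⁻¹, fun α hα => neg_inv_log_pos hα.1 (hα.2.trans_le hα₀),
    tendsto_neg_inv_log_nhdsGT_zero, fun α hα l hl => ?_⟩
  · have hlim : Tendsto (fun α => l / (l - (log α)⁻¹)) (𝓝[>] 0) (𝓝 1) := by
      simpa [← sub_eq_add_neg, hl.ne', Pi.div_def] using
        (tendsto_const_nhds (x := l)).div (tendsto_neg_inv_log_nhdsGT_zero.const_add l)
          (by simpa using hl.ne')
    refine hlim.congr' ?_
    filter_upwards [Ioo_mem_nhdsGT G.hα₀] with α hα
    exact (hr.source_ratio_eq hα₀ hα hl.le).symm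
  · have hρ := neg_inv_log_pos hα.1 (hα.2.trans_le hα₀)
    rw [hr.source_ratio_eq hα₀ hα (hρ.le.trans hl)]
    exact one_half_le_div_sub (neg_pos.mp hρ) hl

theorem HasLogResidual.tendsto_abs_r_mul_rpow_div_rpow_atTop (hα₀ : G.α₀ ≤ 1)
    (hr : G.HasLogResidual) {μ l : ℝ} (hμ : 0 < μ) (hl : 0 < l) :
    Tendsto (fun α => |G.r α l| * l ^ μ / α ^ μ) (𝓝[>] 0) atTop := by
  have hev : ∀ᶠ α in 𝓝[>] 0, α ∈ Ioo 0 G.α₀ := Ioo_mem_nhdsGT G.hα₀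
  have hden : Tendsto (fun α => (1 - l * log α) * α ^ μ) (𝓝[>] 0) (𝓝[>] 0) := by
    refine tendsto_nhdsWithin_iff.mpr ⟨tendsto_one_sub_mul_log_mul_rpow_nhdsGT_zero l hμ, ?_⟩
    filter_upwards [hev] with α hα
    exact mul_pos (one_sub_mul_log_pos hα.1 (hα.2.trans_le hα₀) hl.le) (rpow_pos_of_pos hα.1 μ)
  refine (hden.inv_tendsto_nhdsGT_zero.const_mul_atTop
    (by positivity : 0 < (1 + l) * l ^ μ)).congr' ?_
  filter_upwards [hev] with α hα
  rw [Pi.inv_apply, mul_inv, hr α hα l hl.le]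
  ring

end SRM

/-- Example 4: for `g_α(λ)=(1+(ln α)⁻¹)/(λ-(ln α)⁻¹)` with `α₀ < e⁻¹`
(so `r_α(λ)=(1+λ)/(1-λ ln α)`), `ρ(α) = -(ln α)⁻¹` is optimal qualification with
`s_ρ(λ)=λ/(1+λ)`, the order-source inequality holds with `γ=1/2`, `h(α)=-(ln α)⁻¹`,
and `|r_α(λ)|λ^μ/α^μ → +∞` for every `μ>0`, `λ>0` (no classical qualification). -/
theorem example4_optimal (G : SRM) (hα₀ : G.α₀ < Real.exp (-1))
    (hg : ∀ α ∈ Ioo (0:ℝ) G.α₀, ∀ l : ℝ, 0 ≤ l →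
      G.g α l = (1 + (Real.log α)⁻¹) / (l - (Real.log α)⁻¹)) :
    (∀ l : ℝ, 0 < l →
      G.sLow (fun a => -(Real.log a)⁻¹) l = ENNReal.ofReal (l / (1 + l))) ∧
    (∀ α ∈ Ioo (0:ℝ) G.α₀, ∀ l : ℝ, -(Real.log α)⁻¹ ≤ l →
      (1:ℝ)/2 ≤ l / (l - (Real.log α)⁻¹)) ∧
    optQual G (fun a => -(Real.log a)⁻¹) ∧
    (∀ μ : ℝ, 0 < μ → ∀ l : ℝ, 0 < l →
      Tendsto (fun α => |G.r α l| * l ^ μ / α ^ μ) (𝓝[>] 0) atTop) := by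
  have hα₀_le_one : G.α₀ ≤ 1 := (hα₀.trans (exp_lt_one_iff.mpr (by norm_num))).le
  have hr := SRM.hasLogResidual_of_g_eq hα₀_le_one hg
  exact ⟨fun l hl => hr.sLow_eq hα₀_le_one hl,
    fun α hα l hl =>
      one_half_le_div_sub (inv_lt_zero.mpr (log_neg hα.1 (hα.2.trans_le hα₀_le_one))) hl,
    hr.optQual hα₀_le_one,
    fun μ hμ l hl => hr.tendsto_abs_r_mul_rpow_div_rpow_atTop hα₀_le_one hμ hl⟩
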